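/- arXiv:1309.2888 — 2 statements merged into one kernel-verified Lean document; each statement's English description precedes it below -/
import Mathlib

section
/- The 5×5 matrices B_1, B_2, B_3, B_4, B_5 over Z[a, a^{-1}] satisfy the braid relation B_i · B_{i+1} · B_i = B_{i+1} · B_i · B_{i+1} for each i ∈ {1, 2, 3, 4}. -/
open LaurentPolynomial Matrix

noncomputable section

abbrev Λ : Type := LaurentPolynomial ℤ

/-- The matrices B_i^ε (i = 1,…,5 indexed by `Fin 5`) over Λ = ℤ[a,a⁻¹]. -/
def B (i : Fin 5) (e : ℤ) : Matrix (Fin 5) (Fin 5) Λ :=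
  match i with
  | 0 => !![T e, 0, 0, 0, 0;
            0, T e, 0, 0, 0;
            0, T (-e), -T (-3*e), T (-e), 0;
            0, 0, 0, T e, 0;
            T (-e), 0, 0, 0, -T (-3*e)]
  | 1 => !![-T (-3*e), 0, 0, T (-e), T (-e);
            0, -T (-3*e), T (-e), 0, 0;
            0, 0, T e, 0, 0;
            0, 0, 0, T e, 0;
            0, 0, 0, 0, T e]
  | 2 => !![T e, 0, 0, 0, 0;
            0, T e, 0, 0, 0;
            0, T (-e), -T (-3*e), 0, T (-e);
            T (-e), 0, 0, -T (-3*e), 0;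
            0, 0, 0, 0, T e]
  | 3 => !![-T (-3*e), T (-e), 0, T (-e), 0;
            0, T e, 0, 0, 0;
            0, 0, T e, 0, 0;
            0, 0, 0, T e, 0;
            0, 0, T (-e), 0, -T (-3*e)]
  | 4 => !![T e, 0, 0, 0, 0;
            T (-e), -T (-3*e), 0, 0, 0;
            0, 0, -T (-3*e), T (-e), T (-e);
            0, 0, 0, T e, 0;
            0, 0, 0, 0, T e]

theorem mul_fin_five {R : Type*} [CommRing R] (a00 a01 a02 a03 a04 a10 a11 a12 a13 a14 a20 a21 a22 a23 a24 a30 a31 a32 a33 a34 a40 a41 a42 a43 a44 b00 b01 b02 b03 b04 b10 b11 b12 b13 b14 b20 b21 b22 b23 b24 b30 b31 b32 b33 b34 b40 b41 b42 b43 b44 : R) :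
  !![a00, a01, a02, a03, a04;
    a10, a11, a12, a13, a14;
    a20, a21, a22, a23, a24;
    a30, a31, a32, a33, a34;
    a40, a41, a42, a43, a44] * !![b00, b01, b02, b03, b04;
    b10, b11, b12, b13, b14;
    b20, b21, b22, b23, b24;
    b30, b31, b32, b33, b34;
    b40, b41, b42, b43, b44] =
  !![a00*b00+a01*b10+a02*b20+a03*b30+a04*b40, a00*b01+a01*b11+a02*b21+a03*b31+a04*b41, a00*b02+a01*b12+a02*b22+a03*b32+a04*b42, a00*b03+a01*b13+a02*b23+a03*b33+a04*b43, a00*b04+a01*b14+a02*b24+a03*b34+a04*b44;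
    a10*b00+a11*b10+a12*b20+a13*b30+a14*b40, a10*b01+a11*b11+a12*b21+a13*b31+a14*b41, a10*b02+a11*b12+a12*b22+a13*b32+a14*b42, a10*b03+a11*b13+a12*b23+a13*b33+a14*b43, a10*b04+a11*b14+a12*b24+a13*b34+a14*b44;
    a20*b00+a21*b10+a22*b20+a23*b30+a24*b40, a20*b01+a21*b11+a22*b21+a23*b31+a24*b41, a20*b02+a21*b12+a22*b22+a23*b32+a24*b42, a20*b03+a21*b13+a22*b23+a23*b33+a24*b43, a20*b04+a21*b14+a22*b24+a23*b34+a24*b44;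
    a30*b00+a31*b10+a32*b20+a33*b30+a34*b40, a30*b01+a31*b11+a32*b21+a33*b31+a34*b41, a30*b02+a31*b12+a32*b22+a33*b32+a34*b42, a30*b03+a31*b13+a32*b23+a33*b33+a34*b43, a30*b04+a31*b14+a32*b24+a33*b34+a34*b44;
    a40*b00+a41*b10+a42*b20+a43*b30+a44*b40, a40*b01+a41*b11+a42*b21+a43*b31+a44*b41, a40*b02+a41*b12+a42*b22+a43*b32+a44*b42, a40*b03+a41*b13+a42*b23+a43*b33+a44*b43, a40*b04+a41*b14+a42*b24+a43*b34+a44*b44] := by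
  ext i j
  rw [Matrix.mul_apply, Fin.sum_univ_five]
  fin_cases i <;> fin_cases j <;>
    simp only [Matrix.cons_val', Matrix.cons_val_zero, Matrix.cons_val_one, Matrix.head_cons,
      Matrix.empty_val', Matrix.cons_val_fin_one, Matrix.head_fin_const, Matrix.of_apply,
      Matrix.cons_val_two, Matrix.cons_val_three, Matrix.cons_val_four, Matrix.tail_cons,
      Matrix.cons_val_succ, Fin.isValue, Fin.zero_eta, Fin.mk_one, Fin.reduceFinMk]


theorem ext_fin_five {R : Type*} [CommRing R] {a00 a01 a02 a03 a04 a10 a11 a12 a13 a14 a20 a21 a22 a23 a24 a30 a31 a32 a33 a34 a40 a41 a42 a43 a44 b00 b01 b02 b03 b04 b10 b11 b12 b13 b14 b20 b21 b22 b23 b24 b30 b31 b32 b33 b34 b40 b41 b42 b43 b44 : R}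
  (h00 : a00 = b00) (h01 : a01 = b01) (h02 : a02 = b02) (h03 : a03 = b03) (h04 : a04 = b04) (h10 : a10 = b10) (h11 : a11 = b11) (h12 : a12 = b12) (h13 : a13 = b13) (h14 : a14 = b14) (h20 : a20 = b20) (h21 : a21 = b21) (h22 : a22 = b22) (h23 : a23 = b23) (h24 : a24 = b24) (h30 : a30 = b30) (h31 : a31 = b31) (h32 : a32 = b32) (h33 : a33 = b33) (h34 : a34 = b34) (h40 : a40 = b40) (h41 : a41 = b41) (h42 : a42 = b42) (h43 : a43 = b43) (h44 : a44 = b44) :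
  !![a00, a01, a02, a03, a04;
    a10, a11, a12, a13, a14;
    a20, a21, a22, a23, a24;
    a30, a31, a32, a33, a34;
    a40, a41, a42, a43, a44] = !![b00, b01, b02, b03, b04;
    b10, b11, b12, b13, b14;
    b20, b21, b22, b23, b24;
    b30, b31, b32, b33, b34;
    b40, b41, b42, b43, b44] := by
  subst_vars; rfl


set_option maxHeartbeats 1000000 in
theorem stmt5 : ∀ i : Fin 4,
    B i.castSucc 1 * B i.succ 1 * B i.castSucc 1 =
      B i.succ 1 * B i.castSucc 1 * B i.succ 1 := by
  intro i
  fin_cases i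
  · show B 0 1 * B 1 1 * B 0 1 = B 1 1 * B 0 1 * B 1 1
    simp only [B]
    rw [mul_fin_five, mul_fin_five, mul_fin_five, mul_fin_five]
    apply ext_fin_five <;>
    · simp only [mul_zero, zero_mul, mul_neg, neg_mul, neg_neg, add_zero, zero_add, mul_one,
        one_mul, neg_zero, mul_assoc, ← T_add]
      try norm_num
  · show B 1 1 * B 2 1 * B 1 1 = B 2 1 * B 1 1 * B 2 1
    simp only [B]
    rw [mul_fin_five, mul_fin_five, mul_fin_five, mul_fin_five]
    apply ext_fin_five <;>
    · simp only [mul_zero, zero_mul, mul_neg, neg_mul, neg_neg, add_zero, zero_add, mul_one,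
        one_mul, neg_zero, mul_assoc, ← T_add]
      try norm_num
  · show B 2 1 * B 3 1 * B 2 1 = B 3 1 * B 2 1 * B 3 1
    simp only [B]
    rw [mul_fin_five, mul_fin_five, mul_fin_five, mul_fin_five]
    apply ext_fin_five <;>
    · simp only [mul_zero, zero_mul, mul_neg, neg_mul, neg_neg, add_zero, zero_add, mul_one,
        one_mul, neg_zero, mul_assoc, ← T_add]
      try norm_num
  · show B 3 1 * B 4 1 * B 3 1 = B 4 1 * B 3 1 * B 4 1
    simp only [B]
    rw [mul_fin_five, mul_fin_five, mul_fin_five, mul_fin_five]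
    apply ext_fin_five <;>
    · simp only [mul_zero, zero_mul, mul_neg, neg_mul, neg_neg, add_zero, zero_add, mul_one,
        one_mul, neg_zero, mul_assoc, ← T_add]
      try norm_num

end
end

section
/- The 5×5 matrices B_i and B_j over Z[a, a^{-1}] commute whenever |i - j| ≥ 2, for i, j ∈ {1, 2, 3, 4, 5}. -/
open LaurentPolynomial Matrix

noncomputable section

lemma Bval0 : B 0 1 = !![T 1, 0, 0, 0, 0;
      0, T 1, 0, 0, 0;
      0, T (-1), -T (-3), T (-1), 0;
      0, 0, 0, T 1, 0;
      T (-1), 0, 0, 0, -T (-3)] := by norm_num [B]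

lemma Bval1 : B 1 1 = !![-T (-3), 0, 0, T (-1), T (-1);
      0, -T (-3), T (-1), 0, 0;
      0, 0, T 1, 0, 0;
      0, 0, 0, T 1, 0;
      0, 0, 0, 0, T 1] := by norm_num [B]

lemma Bval2 : B 2 1 = !![T 1, 0, 0, 0, 0;
      0, T 1, 0, 0, 0;
      0, T (-1), -T (-3), 0, T (-1);
      T (-1), 0, 0, -T (-3), 0;
      0, 0, 0, 0, T 1] := by norm_num [B]

lemma Bval3 : B 3 1 = !![-T (-3), T (-1), 0, T (-1), 0;
      0, T 1, 0, 0, 0;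
      0, 0, T 1, 0, 0;
      0, 0, 0, T 1, 0;
      0, 0, T (-1), 0, -T (-3)] := by norm_num [B]

lemma Bval4 : B 4 1 = !![T 1, 0, 0, 0, 0;
      T (-1), -T (-3), 0, 0, 0;
      0, 0, -T (-3), T (-1), T (-1);
      0, 0, 0, T 1, 0;
      0, 0, 0, 0, T 1] := by norm_num [B]

lemma fin5_cases {P : Fin 5 → Prop} (h0 : P 0) (h1 : P 1) (h2 : P 2) (h3 : P 3) (h4 : P 4) :
    ∀ i, P i := by
  intro i
  fin_cases i
  exacts [h0, h1, h2, h3, h4]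

set_option maxHeartbeats 4000000 in
theorem stmt6 : ∀ i j : Fin 5, 2 ≤ |(i : ℤ) - (j : ℤ)| →
    B i 1 * B j 1 = B j 1 * B i 1 := by
  refine fin5_cases ?_ ?_ ?_ ?_ ?_ <;> refine fin5_cases ?_ ?_ ?_ ?_ ?_ <;> intro h <;>
    first
    | (exfalso; revert h; decide)
    | (apply Matrix.ext
       refine fin5_cases ?_ ?_ ?_ ?_ ?_ <;> refine fin5_cases ?_ ?_ ?_ ?_ ?_ <;>
         simp [Bval0, Bval1, Bval2, Bval3, Bval4, Matrix.mul_apply, Fin.sum_univ_five, Matrix.vecHead, Matrix.vecTail,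
           -LaurentPolynomial.T_mul] <;> ring)

end
end
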